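/- arXiv:1911.10526 — 2 statements merged into one kernel-verified Lean document; each statement's English description precedes it below -/
import Mathlib

section
/- Let R be an associative ring with 1, n ≥ 3, m ≤ n−1, A a two-sided ideal of R. If g = diag(x,e) with x ∈ GL(m,R), x ≡ e mod A, and u = [[e,0],[w,e]] is block lower unitriangular with entries of w in a two-sided ideal C, then [g,u] = [[e,0],[w',e]] with all entries of w' in the ideal product C·A. -/
/-!
Since `g` is block diagonal and `u` block lower unitriangular, `[g, u]` is again block lower
unitriangular, with lower-left block `w (x⁻¹ - 1)`. The entries of `w` lie in `C`, and those of
`x⁻¹ - 1 = -x⁻¹ (x - 1)` lie in `A`, so every entry of the product is a sum of elements `c a`.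
-/

open scoped commutatorElement

section

variable {R : Type*} [Ring R]

theorem TwoSidedIdeal.val_inv_sub_one_mem (I : TwoSidedIdeal R) {x : Rˣ}
    (hx : (x : R) - 1 ∈ I) : ((x⁻¹ : Rˣ) : R) - 1 ∈ I := by
  have h : ((x⁻¹ : Rˣ) : R) - 1 = -(↑x⁻¹ * ((x : R) - 1)) := by
    rw [mul_sub, Units.inv_mul, mul_one, neg_sub]
  exact h ▸ I.neg_mem (I.mul_mem_left _ _ hx)

namespace Matrix

theorem mul_apply_mem_span_mul {l m n : Type*} [Fintype m] (C A : TwoSidedIdeal R)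
    {w : Matrix l m R} {v : Matrix m n R} (hw : ∀ i j, w i j ∈ C) (hv : ∀ i j, v i j ∈ A)
    (i : l) (j : n) :
    (w * v) i j ∈ TwoSidedIdeal.span {x | ∃ c ∈ C, ∃ a ∈ A, x = c * a} :=
  sum_mem fun k _ => TwoSidedIdeal.subset_span ⟨w i k, hw i k, v k j, hv k j, rfl⟩

variable {l m : Type*} [Fintype l] [Fintype m] [DecidableEq l] [DecidableEq m]

theorem fromBlocks_diag_mul_lower_mul_diag_mul_lower (x y : Matrix m m R) (w : Matrix l m R) :
    fromBlocks x 0 0 (1 : Matrix l l R) * fromBlocks 1 0 w 1 * fromBlocks y 0 0 1 *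
        fromBlocks 1 0 (-w) 1 =
      fromBlocks (x * y) 0 (w * (y - 1)) 1 := by
  simp [fromBlocks_multiply, Matrix.mul_sub, ← sub_eq_add_neg]

theorem val_inv_of_val_eq_fromBlocks_diag {g : (Matrix (m ⊕ l) (m ⊕ l) R)ˣ}
    {x : (Matrix m m R)ˣ} (hg : g.val = fromBlocks x.val 0 0 1) :
    (g⁻¹).val = fromBlocks (x⁻¹).val 0 0 1 :=
  Units.inv_eq_of_mul_eq_one_right <| by simp [hg, fromBlocks_multiply, ← fromBlocks_one]

theorem val_inv_of_val_eq_fromBlocks_lower {u : (Matrix (m ⊕ l) (m ⊕ l) R)ˣ}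
    {w : Matrix l m R} (hu : u.val = fromBlocks 1 0 w 1) :
    (u⁻¹).val = fromBlocks 1 0 (-w) 1 :=
  Units.inv_eq_of_mul_eq_one_right <| by simp [hu, fromBlocks_multiply, ← fromBlocks_one]

end Matrix

end

theorem commutator_lower_unipotent_general {R : Type*} [Ring R] (n m : ℕ)
    (A C : TwoSidedIdeal R)
    (ξ : (Matrix (Fin m) (Fin m) R)ˣ)
    (hξ : ∀ i j, (ξ.val - 1) i j ∈ A)
    (w : Matrix (Fin (n - m)) (Fin m) R) (hw : ∀ i j, w i j ∈ C)
    (g u : (Matrix (Fin m ⊕ Fin (n - m)) (Fin m ⊕ Fin (n - m)) R)ˣ)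
    (hg : g.val = Matrix.fromBlocks ξ.val 0 0 1)
    (hu : u.val = Matrix.fromBlocks 1 0 w 1) :
    ∃ w' : Matrix (Fin (n - m)) (Fin m) R,
      (⁅g, u⁆).val = Matrix.fromBlocks 1 0 w' 1 ∧
      ∀ i j, w' i j ∈ TwoSidedIdeal.span {x | ∃ c ∈ C, ∃ a ∈ A, x = c * a} := by
  refine ⟨w * ((ξ⁻¹).val - 1), ?_, Matrix.mul_apply_mem_span_mul C A hw ?_⟩
  · rw [commutatorElement_def, Units.val_mul, Units.val_mul, Units.val_mul, hg, hu,
      Matrix.val_inv_of_val_eq_fromBlocks_diag hg, Matrix.val_inv_of_val_eq_fromBlocks_lower hu,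
      Matrix.fromBlocks_diag_mul_lower_mul_diag_mul_lower, Units.mul_inv]
  · exact (A.mem_matrix _ _).1 <|
      (A.matrix (Fin m)).val_inv_sub_one_mem <| (A.mem_matrix _ _).2 hξ

/-- Let `g = diag(x, e)` with `x ∈ GL(m,R)`, `x ≡ e mod A`, and let
`u = [[e, 0],[w, e]]` be block lower unitriangular with entries of `w` in `C`.
Then `[g,u] = [[e, 0],[w', e]]` with all entries of `w'` in the two-sided ideal
product `C·A`. -/
theorem commutator_lower_unipotent {R : Type*} [Ring R] (n m : ℕ)
    (hn : 3 ≤ n) (hm1 : 1 ≤ m) (hm : m ≤ n - 1)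
    (A C : TwoSidedIdeal R)
    (ξ : (Matrix (Fin m) (Fin m) R)ˣ)
    (hξ : ∀ i j, (ξ.val - 1) i j ∈ A)
    (w : Matrix (Fin (n - m)) (Fin m) R) (hw : ∀ i j, w i j ∈ C)
    (g u : (Matrix (Fin m ⊕ Fin (n - m)) (Fin m ⊕ Fin (n - m)) R)ˣ)
    (hg : g.val = Matrix.fromBlocks ξ.val 0 0 1)
    (hu : u.val = Matrix.fromBlocks 1 0 w 1) :
    ∃ w' : Matrix (Fin (n - m)) (Fin m) R,
      (⁅g, u⁆).val = Matrix.fromBlocks 1 0 w' 1 ∧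
      ∀ i j, w' i j ∈ TwoSidedIdeal.span {x | ∃ c ∈ C, ∃ a ∈ A, x = c * a} :=
  commutator_lower_unipotent_general n m A C ξ hξ w hw g u hg hu
end

section
/- Let R be an associative ring with 1, n ≥ 3, and let i, j, h be pairwise distinct indices. Then for all a, b, c ∈ R, t_{ji}(c) [t_{ih}(a), t_{hj}(b)] t_{ji}(c)⁻¹ = [t_{jh}(ca)·t_{ih}(a), t_{hj}(b)·t_{hi}(−bc)]. -/
/-- The elementary transvection `t_{ij}(c) = 1 + c·e_{ij}`, as an invertible
matrix over an associative ring `R`. -/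

def tv {n : ℕ} {R : Type*} [Ring R] {i j : Fin n} (hij : i ≠ j) (c : R) :
    (Matrix (Fin n) (Fin n) R)ˣ where
  val := 1 + Matrix.single i j c
  inv := 1 + Matrix.single i j (-c)
  val_inv := by
    have h : Matrix.single i j c * Matrix.single i j (-c) = 0 :=
      Matrix.single_mul_single_of_ne c i j i hij.symm (-c)
    simp only [add_mul, mul_add, h, one_mul, mul_one, add_zero]
    rw [add_assoc, ← Matrix.single_add]
    simp
  inv_val := by
    have h : Matrix.single i j (-c) * Matrix.single i j c = 0 :=
      Matrix.single_mul_single_of_ne (-c) i j i hij.symm c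
    simp only [add_mul, mul_add, h, one_mul, mul_one, add_zero]
    rw [add_assoc, ← Matrix.single_add]
    simp

open scoped commutatorElement

lemma sb_neg {n : ℕ} {R : Type*} [Ring R] (i j : Fin n) (c : R) :
    Matrix.single i j (-c) = -Matrix.single i j c := by
  ext a b
  simp only [Matrix.single, Matrix.neg_apply, Matrix.of_apply]
  split <;> simp

lemma conj1 {n : ℕ} {R : Type*} [Ring R] {i j h : Fin n}
    (hij : i ≠ j) (hih : i ≠ h) (hjh : j ≠ h) (a c : R) :
    tv hij.symm c * tv hih a * (tv hij.symm c)⁻¹ = tv hjh (c * a) * tv hih a := by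
  rw [mul_inv_eq_iff_eq_mul]
  ext : 1
  simp only [tv, Units.val_mul, mul_add, add_mul, one_mul, mul_one,
    Matrix.single_mul_single_of_ne _ _ _ _ hij,
    Matrix.single_mul_single_of_ne _ _ _ _ hjh.symm,
    Matrix.single_mul_single_of_ne _ _ _ _ hih.symm,
    Matrix.single_mul_single_of_ne _ _ _ _ hjh,
    Matrix.single_mul_single_same, add_zero]
  abel

lemma conj2 {n : ℕ} {R : Type*} [Ring R] {i j h : Fin n}
    (hij : i ≠ j) (hih : i ≠ h) (hjh : j ≠ h) (b c : R) :
    tv hij.symm c * tv hjh.symm b * (tv hij.symm c)⁻¹ =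
      tv hjh.symm b * tv hih.symm (-(b * c)) := by
  rw [mul_inv_eq_iff_eq_mul]
  ext : 1
  simp only [tv, Units.val_mul, mul_add, add_mul, one_mul, mul_one,
    Matrix.single_mul_single_of_ne _ _ _ _ hih,
    Matrix.single_mul_single_of_ne _ _ _ _ hij.symm,
    Matrix.single_mul_single_of_ne _ _ _ _ hjh,
    Matrix.single_mul_single_of_ne _ _ _ _ hij, sb_neg, mul_neg, neg_mul, neg_zero,
    Matrix.single_mul_single_same, add_zero, neg_mul]
  abel

/-- For pairwise distinct indices `i, j, h` and all `a, b, c ∈ R`: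
`t_{ji}(c)·[t_{ih}(a), t_{hj}(b)]·t_{ji}(c)⁻¹
  = [t_{jh}(ca)·t_{ih}(a), t_{hj}(b)·t_{hi}(−bc)]`. -/
theorem conj_commutator_identity {n : ℕ} {R : Type*} [Ring R] (hn : 3 ≤ n)
    {i j h : Fin n} (hij : i ≠ j) (hih : i ≠ h) (hjh : j ≠ h) (a b c : R) :
    tv hij.symm c * ⁅tv hih a, tv hjh.symm b⁆ * (tv hij.symm c)⁻¹ =
      ⁅tv hjh (c * a) * tv hih a, tv hjh.symm b * tv hih.symm (-(b * c))⁆ := by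
  have key := map_commutatorElement (MulAut.conj (tv hij.symm c)) (tv hih a) (tv hjh.symm b)
  simp only [MulAut.conj_apply] at key
  rw [key, conj1 hij hih hjh, conj2 hij hih hjh]
end
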